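/- Suppose C(x) and C_{≥2}(x) are formal power series with C(0)=0, C'(0)=1, C_{≥2} ∈ x²·ℚ[[x]], related by C(x) = C(x)²/x - C_{≥2}(C(x)²/x), and C satisfies 2x·C·C' = C·(1+C) - x. Then C'(x) = ((C(x) - x)/x²)·(1 - C_{≥2}'(C(x)²/x)). -/

import Mathlib

/-!
Write `D = C²/X`. Differentiating `X·D = C²` and eliminating `C·C'` with the differential
equation gives `X²·D' = C - X`. Since `D` has zero constant term, `pcomp` agrees with Mathlib's
`PowerSeries.subst`, so the chain rule applies to `C = D - C₂(D)`, and `C' = D'·(1 - C₂'(D))`.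
-/

open PowerSeries Finset

/-- Composition `f(g(X))` of formal power series (meaningful when `g` has zero
constant term). -/
noncomputable def pcomp (f g : ℚ⟦X⟧) : ℚ⟦X⟧ :=
  PowerSeries.mk fun n => ∑ k ∈ Finset.range (n + 1),
    PowerSeries.coeff k f * PowerSeries.coeff n (g ^ k)

/-- Division of a power series by `X` (dropping the constant term). -/
noncomputable def shiftDiv (f : ℚ⟦X⟧) : ℚ⟦X⟧ :=
  PowerSeries.mk fun n => PowerSeries.coeff (n + 1) f

theorem X_mul_shiftDiv {f : ℚ⟦X⟧} (hf : constantCoeff f = 0) : X * shiftDiv f = f := by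
  ext n
  cases n with
  | zero => simpa using hf.symm
  | succ n => simp [shiftDiv, coeff_succ_X_mul]

theorem constantCoeff_shiftDiv (f : ℚ⟦X⟧) : constantCoeff (shiftDiv f) = coeff 1 f := by
  rw [← coeff_zero_eq_constantCoeff_apply, shiftDiv, coeff_mk]

theorem X_sq_mul_shiftDiv_shiftDiv {f : ℚ⟦X⟧} (hf₀ : constantCoeff f = 0)
    (hf₁ : coeff 1 f = 0) : X ^ 2 * shiftDiv (shiftDiv f) = f := by
  rw [sq, mul_assoc, X_mul_shiftDiv (by rwa [constantCoeff_shiftDiv]), X_mul_shiftDiv hf₀]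

theorem coeff_pow_eq_zero_of_lt {R : Type*} [CommSemiring R] {g : R⟦X⟧} (hg : constantCoeff g = 0) {n k : ℕ} (h : n < k) :
    coeff n (g ^ k) = 0 := by
  obtain ⟨q, hq⟩ : (X : R⟦X⟧) ^ k ∣ g ^ k := pow_dvd_pow_of_dvd (X_dvd_iff.2 hg) k
  rw [hq, coeff_X_pow_mul', if_neg (by omega)]

theorem pcomp_eq_subst (f : ℚ⟦X⟧) {g : ℚ⟦X⟧} (hg : constantCoeff g = 0) :
    pcomp f g = f.subst g := by
  ext n
  rw [coeff_subst' (HasSubst.of_constantCoeff_zero' hg), pcomp, coeff_mk]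
  refine (finsum_eq_sum_of_support_subset _ fun k hk => ?_).symm
  by_contra hkn
  rw [coe_range, Set.mem_Iio, not_lt] at hkn
  exact hk (by simp [coeff_pow_eq_zero_of_lt hg (Nat.lt_of_succ_le hkn)])

theorem derivative_pcomp (f : ℚ⟦X⟧) {g : ℚ⟦X⟧} (hg : constantCoeff g = 0) :
    d⁄dX ℚ (pcomp f g) = pcomp (d⁄dX ℚ f) g * d⁄dX ℚ g := by
  rw [pcomp_eq_subst _ hg, pcomp_eq_subst _ hg,
    derivative_subst (HasSubst.of_constantCoeff_zero' hg)]

theorem X_sq_mul_derivative_shiftDiv_sq {C : ℚ⟦X⟧} (hC0 : constantCoeff C = 0)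
    (hode : 2 * X * C * d⁄dX ℚ C = C * (1 + C) - X) :
    X ^ 2 * d⁄dX ℚ (shiftDiv (C ^ 2)) = C - X := by
  have hX : X * shiftDiv (C ^ 2) = C ^ 2 := X_mul_shiftDiv (by simp [hC0])
  have hder := congrArg (d⁄dX ℚ) hX
  simp only [Derivation.leibniz, Derivation.leibniz_pow, derivative_X, smul_eq_mul,
    nsmul_eq_mul] at hder
  linear_combination X * hder + hode - hX

theorem two_connected_derivative_general (C C₂ : ℚ⟦X⟧)
    (hC0 : PowerSeries.constantCoeff C = 0) (hC1 : PowerSeries.coeff 1 C = 1)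
    (hfun : C = shiftDiv (C ^ 2) - pcomp C₂ (shiftDiv (C ^ 2)))
    (hode : 2 * X * C * d⁄dX ℚ C = C * (1 + C) - X) :
    d⁄dX ℚ C = shiftDiv (shiftDiv (C - X)) *
      (1 - pcomp (d⁄dX ℚ C₂) (shiftDiv (C ^ 2))) := by
  have hD0 : constantCoeff (shiftDiv (C ^ 2)) = 0 := by
    rw [constantCoeff_shiftDiv, coeff_pow_eq_zero_of_lt hC0 one_lt_two]
  have hdD : d⁄dX ℚ (shiftDiv (C ^ 2)) = shiftDiv (shiftDiv (C - X)) := by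
    refine mul_left_cancel₀ (pow_ne_zero 2 (X_ne_zero (R := ℚ))) ?_
    rw [X_sq_mul_derivative_shiftDiv_sq hC0 hode,
      X_sq_mul_shiftDiv_shiftDiv (by simp [hC0]) (by simp [hC1])]
  conv_lhs => rw [hfun]
  rw [map_sub, derivative_pcomp _ hD0, hdD]
  ring

/-- If `C(0)=0`, `C'(0)=1`, `C_{≥2} ∈ x²ℚ[[x]]`, `C = C²/x - C_{≥2}(C²/x)` and
`2x·C·C' = C·(1+C) - x`, then `C' = ((C - x)/x²)·(1 - C_{≥2}'(C²/x))`. -/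
theorem two_connected_derivative (C C₂ : ℚ⟦X⟧)
    (hC0 : PowerSeries.constantCoeff C = 0) (hC1 : PowerSeries.coeff 1 C = 1)
    (h20 : PowerSeries.coeff 0 C₂ = 0) (h21 : PowerSeries.coeff 1 C₂ = 0)
    (hfun : C = shiftDiv (C ^ 2) - pcomp C₂ (shiftDiv (C ^ 2)))
    (hode : 2 * X * C * d⁄dX ℚ C = C * (1 + C) - X) :
    d⁄dX ℚ C = shiftDiv (shiftDiv (C - X)) *
      (1 - pcomp (d⁄dX ℚ C₂) (shiftDiv (C ^ 2))) :=
  two_connected_derivative_general C C₂ hC0 hC1 hfun hode
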